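/- arXiv:2206.02123 — 4 statements merged into one kernel-verified Lean document; each statement's English description precedes it below -/
import Mathlib

section
/- Let A be the unit cube [0,1]ⁿ in ℝⁿ (n ≥ 2) and let u, v ∈ Sⁿ⁻¹. Then |A| · V(A[n-2],[0,u],[0,v]) ≤ (n/(n-1)) · V(A[n-1],[0,u]) · V(A[n-1],[0,v]), where V denotes mixed volume and A[k] means A repeated k times. -/
/-!
For the cube `C = [0,1]ⁿ` and segments `[0,u]`, `[0,v]`, the mixed volumes are read off
`|C + [0,u]| = 1 + ‖u‖₁` and `|C + [0,u] + [0,v]| ≤ (1 + ‖u‖₁)(1 + ‖v‖₁)`: comparing the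
coefficients of `st` gives
`n(n-1) V(C[n-2],[0,u],[0,v]) ≤ ‖u‖₁ ‖v‖₁ = n² V(C[n-1],[0,u]) V(C[n-1],[0,v])`.

Both volume formulas are proved by induction on `n`, slicing along the last coordinate.
Over `y ∈ ℝⁿ⁻¹` the slice of `C + [0,u] + [0,v]` is `ℓ(Θ_y) + [0,1]`, where `Θ_y ⊆ [0,1]²` is the
convex set of times `(s,t)` with `y - s u' - t v' ∈ [0,1]ⁿ⁻¹` and `ℓ(s,t) = s uₙ + t vₙ`.
In dimension one the length of a sum of intervals is the sum of their lengths, so the slice has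
length at most `1 + |uₙ| |π₁ Θ_y| + |vₙ| |π₂ Θ_y|`; integrating `|π₁ Θ_y|` over `y` gives back
`|[0,1]ⁿ⁻¹ + [0,v']|` (Cavalieri for the sheared cylinder), which closes the induction.
-/

open MeasureTheory Set Pointwise Metric Bornology

theorem Set.OrdConnected.volume_eq_ediam {s : Set ℝ} (hs : s.OrdConnected) :
    volume s = ediam s := by
  refine le_antisymm (Real.volume_le_diam s) (ediam_le fun x hx y hy => ?_)
  wlog hxy : x ≤ y generalizing x y
  · rw [edist_comm]; exact this y hy x hx (le_of_not_ge hxy)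
  rw [edist_comm, edist_dist, Real.dist_eq, abs_of_nonneg (sub_nonneg.2 hxy), ← Real.volume_Icc]
  exact measure_mono (hs.out hx hy)

theorem Real.ediam_add {s t : Set ℝ} (hs : IsBounded s) (ht : IsBounded t)
    (hs₀ : s.Nonempty) (ht₀ : t.Nonempty) : ediam (s + t) = ediam s + ediam t := by
  rw [Real.ediam_eq hs, Real.ediam_eq ht, Real.ediam_eq (hs.add ht),
    csSup_add hs₀ hs.bddAbove ht₀ ht.bddAbove, csInf_add hs₀ hs.bddBelow ht₀ ht.bddBelow,
    ← ENNReal.ofReal_add (sub_nonneg.2 (Real.sInf_le_sSup s hs.bddBelow hs.bddAbove))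
      (sub_nonneg.2 (Real.sInf_le_sSup t ht.bddBelow ht.bddAbove))]
  ring_nf

theorem Real.volume_add {s t : Set ℝ} (hs : Convex ℝ s) (ht : Convex ℝ t)
    (hsb : IsBounded s) (htb : IsBounded t) (hs₀ : s.Nonempty) (ht₀ : t.Nonempty) :
    volume (s + t) = volume s + volume t := by
  rw [hs.ordConnected.volume_eq_ediam, ht.ordConnected.volume_eq_ediam,
    (hs.add ht).ordConnected.volume_eq_ediam, Real.ediam_add hsb htb hs₀ ht₀]

theorem Real.volume_smul (c : ℝ) (s : Set ℝ) :
    volume (c • s) = ENNReal.ofReal |c| * volume s := by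
  simp [Measure.addHaar_smul]

section ShearedCylinder

variable {E : Type*} [AddCommGroup E] [Module ℝ E]

theorem mem_add_segment_zero_iff {K : Set E} {w x : E} :
    x ∈ K + segment ℝ 0 w ↔ ∃ t ∈ Icc (0 : ℝ) 1, x - t • w ∈ K := by
  simp only [segment_eq_image, zero_add, smul_zero, mem_add, mem_image]
  constructor
  · rintro ⟨k, hk, _, ⟨t, ht, rfl⟩, rfl⟩
    exact ⟨t, ht, by simpa using hk⟩
  · rintro ⟨t, ht, hx⟩
    exact ⟨_, hx, _, ⟨t, ht, rfl⟩, sub_add_cancel x _⟩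

theorem IsCompact.add_segment [TopologicalSpace E] [IsTopologicalAddGroup E]
    [ContinuousSMul ℝ E] {K : Set E} (hK : IsCompact K) (w : E) :
    IsCompact (K + segment ℝ 0 w) := by
  refine hK.add ?_
  rw [segment_eq_image]
  exact isCompact_Icc.image (by fun_prop)

/-- The image of `K × [0,1]` under the shear `(k, t) ↦ (k + t • w, t)`. -/
def shearedCylinder (K : Set E) (w : E) : Set (E × ℝ) :=
  {p | p.2 ∈ Icc 0 1 ∧ p.1 - p.2 • w ∈ K}

variable {K : Set E} {w : E}

theorem nonempty_preimage_shearedCylinder_iff {x : E} :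
    (Prod.mk x ⁻¹' shearedCylinder K w).Nonempty ↔ x ∈ K + segment ℝ 0 w := by
  rw [mem_add_segment_zero_iff]; rfl

theorem isBounded_preimage_shearedCylinder (K : Set E) (w x : E) :
    IsBounded (Prod.mk x ⁻¹' shearedCylinder K w) :=
  isBounded_Icc (0 : ℝ) 1 |>.subset fun _ ht => ht.1

theorem Convex.preimage_shearedCylinder (hK : Convex ℝ K) (x : E) :
    Convex ℝ (Prod.mk x ⁻¹' shearedCylinder K w) := by
  have : Prod.mk x ⁻¹' shearedCylinder K w = Icc 0 1 ∩ AffineMap.lineMap x (x - w) ⁻¹' K := by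
    ext t; simp [shearedCylinder, AffineMap.lineMap_apply, neg_add_eq_sub]
  rw [this]
  exact (convex_Icc 0 1).inter (hK.affine_preimage _)

variable {F : Type*} [NormedAddCommGroup F] [NormedSpace ℝ F] [MeasurableSpace F]
  [BorelSpace F] [FiniteDimensional ℝ F] {K : Set F} {w : F}

theorem MeasurableSet.shearedCylinder (hK : MeasurableSet K) :
    MeasurableSet (shearedCylinder K w) :=
  (measurable_snd measurableSet_Icc).inter (hK.preimage (by fun_prop))

theorem measurable_volume_preimage_shearedCylinder (hK : MeasurableSet K) :
    Measurable fun x => volume (Prod.mk x ⁻¹' shearedCylinder K w) :=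
  measurable_measure_prodMk_left hK.shearedCylinder

theorem lintegral_volume_preimage_shearedCylinder (μ : Measure F) [μ.IsAddRightInvariant]
    [SFinite μ] (hK : MeasurableSet K) (w : F) :
    ∫⁻ x, volume (Prod.mk x ⁻¹' shearedCylinder K w) ∂μ = μ K := by
  have slice (t : ℝ) : μ ((fun x => (x, t)) ⁻¹' shearedCylinder K w) =
      (Icc 0 1).indicator (fun _ => μ K) t := by
    by_cases ht : t ∈ Icc (0 : ℝ) 1
    · have : (fun x => (x, t)) ⁻¹' shearedCylinder K w = (· + -(t • w)) ⁻¹' K := by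
        ext x
        simp only [_root_.shearedCylinder, mem_preimage, mem_ofPred_eq, ht, true_and,
          sub_eq_add_neg]
      rw [this, measure_preimage_add_right, indicator_of_mem ht]
    · have : (fun x => (x, t)) ⁻¹' shearedCylinder K w = ∅ := by
        ext x
        simp only [_root_.shearedCylinder, mem_preimage, mem_ofPred_eq, ht, false_and,
          mem_empty_iff_false]
      rw [this, indicator_of_notMem ht, measure_empty]
  rw [← Measure.prod_apply hK.shearedCylinder, Measure.prod_apply_symm hK.shearedCylinder,
    lintegral_congr slice, lintegral_indicator_const measurableSet_Icc, Real.volume_Icc]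
  simp

end ShearedCylinder

theorem Fin.snoc_sub_smul_snoc {n : ℕ} (y w : Fin n → ℝ) (z c t : ℝ) :
    (Fin.snoc y z : Fin (n + 1) → ℝ) - t • Fin.snoc w c = Fin.snoc (y - t • w) (z - t * c) := by
  ext i
  refine Fin.lastCases ?_ (fun j => ?_) i <;> simp

theorem Fin.snoc_mem_Icc_zero_one {n : ℕ} (y : Fin n → ℝ) (z : ℝ) :
    (Fin.snoc y z : Fin (n + 1) → ℝ) ∈ Icc 0 1 ↔ y ∈ Icc 0 1 ∧ z ∈ Icc 0 1 := by
  simp only [mem_Icc, Pi.le_def, Fin.forall_fin_succ', Fin.snoc_castSucc, Fin.snoc_last,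
    Pi.zero_apply, Pi.one_apply]
  tauto

theorem volume_eq_lintegral_volume_snoc {n : ℕ} {S : Set (Fin (n + 1) → ℝ)}
    (hS : MeasurableSet S) :
    volume S = ∫⁻ y, volume {z : ℝ | (Fin.snoc y z : Fin (n + 1) → ℝ) ∈ S} := by
  have e := (volume_preserving_piFinSuccAbove (fun _ : Fin (n + 1) => ℝ) (Fin.last n)).symm
  rw [← e.measure_preimage hS.nullMeasurableSet, Measure.volume_eq_prod,
    Measure.prod_apply_symm (hS.preimage e.measurable)]
  simp only [MeasurableEquiv.piFinSuccAbove, Fin.insertNthEquiv_last, Fin.snocEquiv,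
    Equiv.symm_mk, MeasurableEquiv.symm_mk, MeasurableEquiv.coe_mk, Equiv.coe_fn_mk]
  rfl

theorem volume_pi_of_isEmpty {ι : Type*} [Fintype ι] [IsEmpty ι] {S : Set (ι → ℝ)}
    (hS : S.Nonempty) : volume S = 1 := by
  rw [hS.eq_univ, Measure.volume_pi_eq_dirac, measure_univ]

section Cube

variable {n : ℕ}

theorem volume_cube : volume (Icc (0 : Fin n → ℝ) 1) = 1 := by
  simp [Real.volume_Icc_pi]

theorem measurableSet_cube_add_segment (u : Fin n → ℝ) :
    MeasurableSet (Icc (0 : Fin n → ℝ) 1 + segment ℝ 0 u) :=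
  (isCompact_Icc.add_segment u).isClosed.measurableSet

theorem measurableSet_cube_add_segment_add_segment (u v : Fin n → ℝ) :
    MeasurableSet (Icc (0 : Fin n → ℝ) 1 + segment ℝ 0 u + segment ℝ 0 v) :=
  ((isCompact_Icc.add_segment u).add_segment v).isClosed.measurableSet

theorem preimage_snoc_cube_add_segment (y w : Fin n → ℝ) (c : ℝ) :
    {z : ℝ | (Fin.snoc y z : Fin (n + 1) → ℝ) ∈ Icc 0 1 + segment ℝ 0 (Fin.snoc w c)} =
      c • (Prod.mk y ⁻¹' shearedCylinder (Icc 0 1) w) + Icc 0 1 := by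
  ext z
  rw [mem_ofPred_eq, mem_add_segment_zero_iff]
  simp only [Fin.snoc_sub_smul_snoc, Fin.snoc_mem_Icc_zero_one, mem_add, mem_smul_set,
    mem_preimage, shearedCylinder, mem_ofPred_eq]
  constructor
  · rintro ⟨t, ht, hy, hz⟩
    exact ⟨t * c, ⟨t, ⟨ht, hy⟩, by rw [smul_eq_mul, mul_comm]⟩, _, hz, add_sub_cancel _ _⟩
  · rintro ⟨_, ⟨t, ⟨ht, hy⟩, rfl⟩, b, hb, rfl⟩
    exact ⟨t, ht, hy, by rwa [smul_eq_mul, mul_comm, add_sub_cancel_left]⟩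

theorem preimage_snoc_cube_add_segment_add_segment_subset (y u v : Fin n → ℝ) (c d : ℝ) :
    {z : ℝ | (Fin.snoc y z : Fin (n + 1) → ℝ) ∈
        Icc 0 1 + segment ℝ 0 (Fin.snoc u c) + segment ℝ 0 (Fin.snoc v d)} ⊆
      c • (Prod.mk y ⁻¹' shearedCylinder (Icc 0 1 + segment ℝ 0 v) u) +
        d • (Prod.mk y ⁻¹' shearedCylinder (Icc 0 1 + segment ℝ 0 u) v) + Icc 0 1 := by
  intro z hz
  rw [mem_ofPred_eq, mem_add_segment_zero_iff] at hz
  obtain ⟨t, ht, hz⟩ := hz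
  rw [Fin.snoc_sub_smul_snoc, mem_add_segment_zero_iff] at hz
  obtain ⟨s, hs, hz⟩ := hz
  rw [Fin.snoc_sub_smul_snoc, Fin.snoc_mem_Icc_zero_one, sub_right_comm] at hz
  refine ⟨s * c + t * d, ⟨s * c, ?_, t * d, ?_, rfl⟩, _, hz.2, by ring⟩
  · rw [mul_comm]
    exact smul_mem_smul_set ⟨hs, mem_add_segment_zero_iff.2 ⟨t, ht, hz.1⟩⟩
  · rw [mul_comm]
    refine smul_mem_smul_set ⟨ht, mem_add_segment_zero_iff.2 ⟨s, hs, ?_⟩⟩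
    rw [sub_right_comm]
    exact hz.1

theorem volume_preimage_snoc_cube_add_segment (y w : Fin n → ℝ) (c : ℝ) :
    volume {z : ℝ | (Fin.snoc y z : Fin (n + 1) → ℝ) ∈ Icc 0 1 + segment ℝ 0 (Fin.snoc w c)} =
      (Icc 0 1 + segment ℝ 0 w).indicator 1 y +
        ENNReal.ofReal |c| * volume (Prod.mk y ⁻¹' shearedCylinder (Icc 0 1) w) := by
  rw [preimage_snoc_cube_add_segment]
  by_cases hy : y ∈ Icc 0 1 + segment ℝ 0 w
  · rw [Real.volume_add (((convex_Icc 0 1).preimage_shearedCylinder y).smul c) (convex_Icc 0 1)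
      ((isBounded_preimage_shearedCylinder _ w y).smul₀ c) (isBounded_Icc 0 1)
      (nonempty_preimage_shearedCylinder_iff.2 hy).smul_set (nonempty_Icc.2 zero_le_one),
      Real.volume_smul, Real.volume_Icc, indicator_of_mem hy]
    simp [add_comm]
  · rw [indicator_of_notMem hy,
      not_nonempty_iff_eq_empty.1 (mt nonempty_preimage_shearedCylinder_iff.1 hy)]
    simp

theorem volume_preimage_snoc_cube_add_segment_add_segment_le (y u v : Fin n → ℝ) (c d : ℝ) :
    volume {z : ℝ | (Fin.snoc y z : Fin (n + 1) → ℝ) ∈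
        Icc 0 1 + segment ℝ 0 (Fin.snoc u c) + segment ℝ 0 (Fin.snoc v d)} ≤
      (Icc 0 1 + segment ℝ 0 u + segment ℝ 0 v).indicator 1 y +
        ENNReal.ofReal |c| * volume (Prod.mk y ⁻¹' shearedCylinder (Icc 0 1 + segment ℝ 0 v) u) +
        ENNReal.ofReal |d| *
          volume (Prod.mk y ⁻¹' shearedCylinder (Icc 0 1 + segment ℝ 0 u) v) := by
  refine (measure_mono (preimage_snoc_cube_add_segment_add_segment_subset y u v c d)).trans ?_
  have hconv (w : Fin n → ℝ) : Convex ℝ (Icc 0 1 + segment ℝ 0 w) :=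
    (convex_Icc 0 1).add (convex_segment 0 w)
  by_cases hy : y ∈ Icc 0 1 + segment ℝ 0 u + segment ℝ 0 v
  · have hu := nonempty_preimage_shearedCylinder_iff.2
      (add_right_comm (Icc (0 : Fin n → ℝ) 1) _ _ ▸ hy)
    have hv := nonempty_preimage_shearedCylinder_iff.2 hy
    have hbu := isBounded_preimage_shearedCylinder (Icc 0 1 + segment ℝ 0 v) u y
    have hbv := isBounded_preimage_shearedCylinder (Icc 0 1 + segment ℝ 0 u) v y
    have hcu := ((hconv v).preimage_shearedCylinder (w := u) y).smul c
    have hcv := ((hconv u).preimage_shearedCylinder (w := v) y).smul d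
    rw [Real.volume_add (hcu.add hcv) (convex_Icc 0 1) ((hbu.smul₀ c).add (hbv.smul₀ d))
      (isBounded_Icc 0 1) (hu.smul_set.add hv.smul_set) (nonempty_Icc.2 zero_le_one),
      Real.volume_add hcu hcv (hbu.smul₀ c) (hbv.smul₀ d) hu.smul_set hv.smul_set,
      Real.volume_smul, Real.volume_smul, Real.volume_Icc, indicator_of_mem hy]
    simp [add_comm, add_left_comm]
  · rw [not_nonempty_iff_eq_empty.1 (mt nonempty_preimage_shearedCylinder_iff.1 hy)]
    simp

theorem volume_cube_add_segment_snoc (w : Fin n → ℝ) (c : ℝ) :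
    volume (Icc 0 1 + segment ℝ 0 (Fin.snoc w c)) =
      volume (Icc 0 1 + segment ℝ 0 w) + ENNReal.ofReal |c| := by
  rw [volume_eq_lintegral_volume_snoc (measurableSet_cube_add_segment _),
    lintegral_congr fun y => volume_preimage_snoc_cube_add_segment y w c,
    lintegral_add_left (measurable_one.indicator (measurableSet_cube_add_segment w)),
    lintegral_indicator_one (measurableSet_cube_add_segment w),
    lintegral_const_mul' _ _ ENNReal.ofReal_ne_top,
    lintegral_volume_preimage_shearedCylinder _ measurableSet_Icc, volume_cube, mul_one]

theorem volume_cube_add_segment_add_segment_snoc_le (u v : Fin n → ℝ) (c d : ℝ) :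
    volume (Icc 0 1 + segment ℝ 0 (Fin.snoc u c) + segment ℝ 0 (Fin.snoc v d)) ≤
      volume (Icc 0 1 + segment ℝ 0 u + segment ℝ 0 v) +
        ENNReal.ofReal |c| * volume (Icc 0 1 + segment ℝ 0 v) +
        ENNReal.ofReal |d| * volume (Icc 0 1 + segment ℝ 0 u) := by
  rw [volume_eq_lintegral_volume_snoc (measurableSet_cube_add_segment_add_segment _ _)]
  refine (lintegral_mono fun y =>
    volume_preimage_snoc_cube_add_segment_add_segment_le y u v c d).trans_eq ?_
  rw [lintegral_add_right _ ((measurable_volume_preimage_shearedCylinder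
      (measurableSet_cube_add_segment u)).const_mul _),
    lintegral_add_left (measurable_one.indicator
      (measurableSet_cube_add_segment_add_segment u v)),
    lintegral_indicator_one (measurableSet_cube_add_segment_add_segment u v),
    lintegral_const_mul' _ _ ENNReal.ofReal_ne_top,
    lintegral_const_mul' _ _ ENNReal.ofReal_ne_top,
    lintegral_volume_preimage_shearedCylinder _ (measurableSet_cube_add_segment v),
    lintegral_volume_preimage_shearedCylinder _ (measurableSet_cube_add_segment u)]

theorem volume_cube_add_segment (u : Fin n → ℝ) :
    volume (Icc 0 1 + segment ℝ 0 u) = ENNReal.ofReal (1 + ∑ i, |u i|) := by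
  induction n with
  | zero =>
    rw [volume_pi_of_isEmpty ((nonempty_Icc.2 zero_le_one).add ⟨0, left_mem_segment ℝ 0 u⟩)]
    simp
  | succ n ih =>
    cases u using Fin.snocCases with
    | snoc w c =>
    rw [volume_cube_add_segment_snoc, ih, ← ENNReal.ofReal_add (by positivity) (abs_nonneg c),
      Fin.sum_univ_castSucc]
    simp [add_assoc]

theorem volume_cube_add_segment_add_segment_le (u v : Fin n → ℝ) :
    volume (Icc 0 1 + segment ℝ 0 u + segment ℝ 0 v) ≤
      ENNReal.ofReal ((1 + ∑ i, |u i|) * (1 + ∑ i, |v i|)) := by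
  induction n with
  | zero =>
    rw [volume_pi_of_isEmpty (((nonempty_Icc.2 zero_le_one).add
      ⟨0, left_mem_segment ℝ 0 u⟩).add ⟨0, left_mem_segment ℝ 0 v⟩)]
    simp
  | succ n ih =>
    cases u using Fin.snocCases with
    | snoc u c =>
    cases v using Fin.snocCases with
    | snoc v d =>
    have ha : 0 ≤ ∑ i, |u i| := by positivity
    have hb : 0 ≤ ∑ i, |v i| := by positivity
    calc _ ≤ _ := volume_cube_add_segment_add_segment_snoc_le u v c d
      _ ≤ ENNReal.ofReal ((1 + ∑ i, |u i|) * (1 + ∑ i, |v i|) + |c| * (1 + ∑ i, |v i|) +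
            |d| * (1 + ∑ i, |u i|)) := by
        rw [volume_cube_add_segment, volume_cube_add_segment,
          ← ENNReal.ofReal_mul (abs_nonneg c), ← ENNReal.ofReal_mul (abs_nonneg d),
          ENNReal.ofReal_add (by positivity) (by positivity),
          ENNReal.ofReal_add (by positivity) (by positivity)]
        gcongr
        exact ih u v
      _ ≤ _ := by
        refine ENNReal.ofReal_le_ofReal ?_
        simp only [Fin.sum_univ_castSucc, Fin.snoc_castSucc, Fin.snoc_last]
        nlinarith [abs_nonneg c, abs_nonneg d]

end Cube

section Euclidean

variable {n : ℕ}

theorem preimage_ofLp_add_segment {ι : Type*} (K : Set (ι → ℝ)) (w : EuclideanSpace ℝ ι) :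
    WithLp.ofLp ⁻¹' (K + segment ℝ 0 (WithLp.ofLp w)) = WithLp.ofLp ⁻¹' K + segment ℝ 0 w := by
  ext x
  simp only [mem_preimage, mem_add_segment_zero_iff, WithLp.ofLp_sub, WithLp.ofLp_smul]

theorem volume_preimage_ofLp {ι : Type*} [Fintype ι] {S : Set (ι → ℝ)} (hS : MeasurableSet S) :
    volume (WithLp.ofLp ⁻¹' S : Set (EuclideanSpace ℝ ι)) = volume S :=
  (PiLp.volume_preserving_ofLp ι).measure_preimage hS.nullMeasurableSet

theorem volume_euclideanCube :
    volume (WithLp.ofLp ⁻¹' Icc 0 1 : Set (EuclideanSpace ℝ (Fin n))) = 1 := by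
  rw [volume_preimage_ofLp measurableSet_Icc, volume_cube]

theorem volume_euclideanCube_add_segment (u : EuclideanSpace ℝ (Fin n)) :
    volume (WithLp.ofLp ⁻¹' Icc 0 1 + segment ℝ 0 u) = ENNReal.ofReal (1 + ∑ i, |u i|) := by
  rw [← preimage_ofLp_add_segment, volume_preimage_ofLp (measurableSet_cube_add_segment _),
    volume_cube_add_segment]

theorem volume_euclideanCube_add_segment_add_segment_le (u v : EuclideanSpace ℝ (Fin n)) :
    volume (WithLp.ofLp ⁻¹' Icc 0 1 + segment ℝ 0 u + segment ℝ 0 v) ≤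
      ENNReal.ofReal ((1 + ∑ i, |u i|) * (1 + ∑ i, |v i|)) := by
  rw [← preimage_ofLp_add_segment, ← preimage_ofLp_add_segment,
    volume_preimage_ofLp (measurableSet_cube_add_segment_add_segment _ _)]
  exact volume_cube_add_segment_add_segment_le _ _

end Euclidean

theorem cube_local_alexandrov_fenchel_general (n : ℕ) (hn : 2 ≤ n)
    (u v : EuclideanSpace ℝ (Fin n))
    (A : Set (EuclideanSpace ℝ (Fin n)))
    (hA : A = {x : EuclideanSpace ℝ (Fin n) | ∀ i, x i ∈ Set.Icc (0:ℝ) 1})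
    (Vu Vv Vuv : ℝ)
    (hexp : ∀ s t : ℝ, 0 ≤ s → 0 ≤ t →
      (volume (A + s • segment ℝ 0 u + t • segment ℝ 0 v)).toReal =
        (volume A).toReal + (n : ℝ) * Vu * s + (n : ℝ) * Vv * t
          + (n : ℝ) * ((n : ℝ) - 1) * Vuv * (s * t)) :
    (volume A).toReal * Vuv ≤ ((n : ℝ) / ((n : ℝ) - 1)) * Vu * Vv := by
  obtain rfl : A = WithLp.ofLp ⁻¹' Icc 0 1 := by
    rw [hA]; ext x; simp [Pi.le_def, forall_and]
  have hseg (w : EuclideanSpace ℝ (Fin n)) : (0 : ℝ) • segment ℝ 0 w = 0 :=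
    zero_smul_set ⟨0, left_mem_segment ℝ 0 w⟩
  have hu := hexp 1 0 zero_le_one le_rfl
  have hv := hexp 0 1 le_rfl zero_le_one
  have huv := ENNReal.toReal_le_of_le_ofReal (by positivity)
    (volume_euclideanCube_add_segment_add_segment_le u v)
  rw [← one_smul ℝ (segment ℝ 0 u), ← one_smul ℝ (segment ℝ 0 v),
    hexp 1 1 zero_le_one zero_le_one] at huv
  simp only [one_smul, hseg, add_zero, volume_euclideanCube, volume_euclideanCube_add_segment,
    ENNReal.toReal_one, ENNReal.toReal_ofReal (by positivity : (0 : ℝ) ≤ 1 + ∑ i, |u i|),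
    ENNReal.toReal_ofReal (by positivity : (0 : ℝ) ≤ 1 + ∑ i, |v i|)] at hu hv huv ⊢
  rw [show ∑ i, |u i| = n * Vu by linarith, show ∑ i, |v i| = n * Vv by linarith] at huv
  have key : (n : ℝ) * ((n - 1) * Vuv) ≤ n * (n * Vu * Vv) := by linarith
  have hn' : (2 : ℝ) ≤ n := by exact_mod_cast hn
  rw [one_mul, div_mul_eq_mul_div, div_mul_eq_mul_div, le_div_iff₀ (by linarith), mul_comm]
  exact le_of_mul_le_mul_left key (by linarith)

/-- Local Alexandrov–Fenchel inequality for the unit cube `A = [0,1]ⁿ` and two segments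
`[0,u]`, `[0,v]` with `u, v` unit vectors:
`|A| · V(A[n-2],[0,u],[0,v]) ≤ (n/(n-1)) · V(A[n-1],[0,u]) · V(A[n-1],[0,v])`.
Mixed volumes are encoded through the coefficients of the polynomial expansion
`|A + s·[0,u] + t·[0,v]| = |A| + n·V(A[n-1],[0,u])·s + n·V(A[n-1],[0,v])·t
  + n(n-1)·V(A[n-2],[0,u],[0,v])·st`  (the terms with a segment repeated twice vanish). -/
theorem cube_local_alexandrov_fenchel (n : ℕ) (hn : 2 ≤ n)
    (u v : EuclideanSpace ℝ (Fin n)) (hu : ‖u‖ = 1) (hv : ‖v‖ = 1)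
    (A : Set (EuclideanSpace ℝ (Fin n)))
    (hA : A = {x : EuclideanSpace ℝ (Fin n) | ∀ i, x i ∈ Set.Icc (0:ℝ) 1})
    (Vu Vv Vuv : ℝ)
    (hexp : ∀ s t : ℝ, 0 ≤ s → 0 ≤ t →
      (volume (A + s • segment ℝ 0 u + t • segment ℝ 0 v)).toReal =
        (volume A).toReal + (n : ℝ) * Vu * s + (n : ℝ) * Vv * t
          + (n : ℝ) * ((n : ℝ) - 1) * Vuv * (s * t)) :
    (volume A).toReal * Vuv ≤ ((n : ℝ) / ((n : ℝ) - 1)) * Vu * Vv :=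
  cube_local_alexandrov_fenchel_general n hn u v A hA Vu Vv Vuv hexp
end

section
/- Let u₁,...,u_m ∈ ℝⁿ with m ≥ n, and let U be the n × m matrix with columns u₁,...,u_m. Then the ℓ₂-sum [-u₁,u₁] ⊕₂ ··· ⊕₂ [-u_m,u_m] equals U(B₂^m) = √(UU*) B₂ⁿ, and its volume squared equals |B₂ⁿ|² · Σ_{|I|=n} (det(uᵢ)_{i∈I})², the sum over n-element subsets I of {1,...,m} (Cauchy–Binet). -/
/-!
The ℓ₂-sum of the segments `[-uᵢ, uᵢ]` has support function `x ↦ (∑ ⟨uᵢ, x⟩²)^{1/2} = ‖Uᵀ x‖`,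
which is also the support function of `U(B₂^m)`; a compact convex body is determined by its
support function (Hahn–Banach), so the two agree. Since `‖Uᵀ x‖² = ⟨x, UUᵀ x⟩`, the body only
depends on `UUᵀ = S²` with `S = √(UUᵀ)`, hence equals `S(B₂ⁿ)`. Its volume is then
`|det S| · |B₂ⁿ|`, and `det S² = det (UUᵀ) = ∑_I det(U_I)²` by the Cauchy–Binet formula.
-/

open MeasureTheory
open scoped RealInnerProductSpace

section
open scoped ComplexOrder

/-- The positive semidefinite square root of a positive semidefinite matrix
(the definition of `Matrix.PosSemidef.sqrt` in the older Mathlib, since removed). -/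
noncomputable def Matrix.PosSemidef.sqrt {n : Type*} [Fintype n] [DecidableEq n]
    {𝕜 : Type*} [RCLike 𝕜] {A : Matrix n n 𝕜} (hA : A.PosSemidef) : Matrix n n 𝕜 :=
  (hA.1.eigenvectorUnitary : Matrix n n 𝕜) *
    Matrix.diagonal ((RCLike.ofReal : ℝ → 𝕜) ∘ (√·) ∘ hA.1.eigenvalues) *
  (star hA.1.eigenvectorUnitary : Matrix n n 𝕜)

end

namespace Matrix

open Finset

variable {R : Type*} [CommRing R]

theorem det_mul_eq_sum_prod_mul_det_submatrix {ι κ : Type*} [Fintype ι] [DecidableEq ι]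
    [Fintype κ] (A : Matrix ι κ R) (B : Matrix κ ι R) :
    (A * B).det = ∑ f : ι → κ, (∏ i, A i (f i)) * (B.submatrix f id).det := by
  have hrows : A * B = Matrix.of fun i => ∑ j, A i j • B j := by
    ext i k; simp [Matrix.mul_apply]
  rw [hrows]
  refine (detRowAlternating.toMultilinearMap.map_sum fun i j => A i j • B j).trans ?_
  refine Fintype.sum_congr _ _ fun f => ?_
  exact (detRowAlternating.toMultilinearMap.map_smul_univ _ _).trans (smul_eq_mul _ _)

theorem sum_perm_prod_mul_det_submatrix {ι κ : Type*} [Fintype ι] [DecidableEq ι]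
    (A : Matrix ι κ R) (B : Matrix κ ι R) (e : ι → κ) :
    ∑ σ : Equiv.Perm ι, (∏ i, A i (e (σ i))) * (B.submatrix (e ∘ σ) id).det =
      (A.submatrix id e).det * (B.submatrix e id).det := by
  have hperm (σ : Equiv.Perm ι) :
      (B.submatrix (e ∘ σ) id).det = Equiv.Perm.sign σ * (B.submatrix e id).det :=
    det_permute σ (B.submatrix e id)
  simp_rw [hperm, ← mul_assoc, ← sum_mul]
  congr 1
  rw [← det_transpose, det_apply']
  exact Fintype.sum_congr _ _ fun σ => mul_comm _ _

variable {κ : Type*} [LinearOrder κ]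

theorem injective_orderEmbOfFin_comp_perm {n : ℕ} :
    Function.Injective fun p : {s : Finset κ // s.card = n} × Equiv.Perm (Fin n) =>
      p.1.1.orderEmbOfFin p.1.2 ∘ p.2 := by
  rintro ⟨⟨s, hs⟩, σ⟩ ⟨⟨t, ht⟩, τ⟩ h
  have hst : s = t := by
    simpa [Set.range_comp, σ.surjective.range_eq, τ.surjective.range_eq] using
      congrArg Set.range h
  subst hst
  simp only [Prod.mk.injEq, true_and]
  exact Equiv.ext fun i => (s.orderEmbOfFin hs).injective (congrFun h i)

theorem exists_orderEmbOfFin_comp_perm {n : ℕ} {f : Fin n → κ}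
    (hf : Function.Injective f) :
    ∃ p : {s : Finset κ // s.card = n} × Equiv.Perm (Fin n),
      p.1.1.orderEmbOfFin p.1.2 ∘ p.2 = f := by
  have hcard : (univ.image f).card = n := by simp [card_image_of_injective _ hf]
  set e := (univ.image f).orderIsoOfFin hcard
  let g : Fin n → Fin n := fun i => e.symm ⟨f i, mem_image_of_mem f (mem_univ i)⟩
  have hg : Function.Injective g := fun a b hab =>
    hf (congrArg Subtype.val (e.symm.injective hab))
  refine ⟨⟨⟨_, hcard⟩, Equiv.ofBijective g (Finite.injective_iff_bijective.mp hg)⟩, ?_⟩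
  funext i
  exact congrArg Subtype.val (e.apply_symm_apply _)

theorem det_mul_eq_sum_det_submatrix_mul_det_submatrix {n : ℕ} [Fintype κ]
    (A : Matrix (Fin n) κ R) (B : Matrix κ (Fin n) R) :
    (A * B).det = ∑ I : {s : Finset κ // s.card = n},
      (A.submatrix id (I.1.orderEmbOfFin I.2)).det *
        (B.submatrix (I.1.orderEmbOfFin I.2) id).det := by
  -- `(I, σ) ↦ I.orderEmbOfFin ∘ σ` enumerates the injections `Fin n → κ`; for any other `f`,
  -- `B.submatrix f id` has two equal rows.
  have hF : ∀ f ∉ Set.range fun p : {s : Finset κ // s.card = n} × Equiv.Perm (Fin n) =>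
      p.1.1.orderEmbOfFin p.1.2 ∘ p.2, (∏ i, A i (f i)) * (B.submatrix f id).det = 0 := by
    intro f hf
    by_cases hinj : Function.Injective f
    · exact absurd (exists_orderEmbOfFin_comp_perm hinj) hf
    · obtain ⟨i, j, hij, hne⟩ := Function.not_injective_iff.mp hinj
      exact mul_eq_zero_of_right _ (det_zero_of_row_eq hne (funext fun k => congrArg (B · k) hij))
  rw [det_mul_eq_sum_prod_mul_det_submatrix, ← Fintype.sum_of_injective _
    injective_orderEmbOfFin_comp_perm _ _ hF fun _ => rfl, Fintype.sum_prod_type]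
  exact Fintype.sum_congr _ _ fun I => sum_perm_prod_mul_det_submatrix A B (I.1.orderEmbOfFin I.2)

theorem det_mul_transpose_eq_sum_det_sq {n : ℕ} [Fintype κ] (A : Matrix (Fin n) κ R) :
    (A * Aᵀ).det = ∑ I : {s : Finset κ // s.card = n},
      (A.submatrix id (I.1.orderEmbOfFin I.2)).det ^ 2 := by
  rw [det_mul_eq_sum_det_submatrix_mul_det_submatrix]
  refine Fintype.sum_congr _ _ fun I => ?_
  rw [← transpose_submatrix, det_transpose, sq]

end Matrix

namespace Matrix.PosSemidef
open scoped ComplexOrder MatrixOrder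

variable {n 𝕜 : Type*} [Fintype n] [DecidableEq n] [RCLike 𝕜] {A : Matrix n n 𝕜}

theorem sqrt_eq_cfcSqrt (hA : A.PosSemidef) : hA.sqrt = CFC.sqrt A := by
  rw [CFC.sqrt_eq_real_sqrt A hA.nonneg, cfcₙ_eq_cfc, hA.1.cfc_eq]
  rfl

theorem sqrt_mul_self (hA : A.PosSemidef) : hA.sqrt * hA.sqrt = A := by
  rw [sqrt_eq_cfcSqrt]
  exact CFC.sqrt_mul_sqrt_self A hA.nonneg

theorem conjTranspose_sqrt (hA : A.PosSemidef) : hA.sqrtᴴ = hA.sqrt := by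
  rw [sqrt_eq_cfcSqrt]
  exact (CFC.sqrt_nonneg A).isSelfAdjoint

end Matrix.PosSemidef

section
variable {E F : Type*} [NormedAddCommGroup E] [InnerProductSpace ℝ E]

theorem exists_mem_closedBall_inner_eq_norm (w : E) :
    ∃ z ∈ Metric.closedBall (0 : E) 1, ⟪w, z⟫ = ‖w‖ := by
  rcases eq_or_ne w 0 with rfl | hw
  · exact ⟨0, Metric.mem_closedBall_self zero_le_one, by simp⟩
  · refine ⟨‖w‖⁻¹ • w, ?_, ?_⟩
    · simp [norm_smul, hw]
    · rw [real_inner_smul_right, real_inner_self_eq_norm_sq, sq,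
        inv_mul_cancel_left₀ (norm_ne_zero_iff.mpr hw)]

variable [NormedAddCommGroup F] [InnerProductSpace ℝ F] [FiniteDimensional ℝ E] [CompleteSpace F]

theorem ContinuousLinearMap.image_closedBall_eq_setOf_inner_le (A : E →L[ℝ] F) :
    A '' Metric.closedBall 0 1 = {y | ∀ x, ⟪x, y⟫ ≤ ‖adjoint A x‖} := by
  ext y
  constructor
  · rintro ⟨z, hz, rfl⟩ x
    calc ⟪x, A z⟫ = ⟪adjoint A x, z⟫ := (adjoint_inner_left A z x).symm
      _ ≤ ‖adjoint A x‖ * ‖z‖ := real_inner_le_norm _ _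
      _ ≤ ‖adjoint A x‖ := mul_le_of_le_one_right (norm_nonneg _) (mem_closedBall_zero_iff.mp hz)
  · intro hy
    by_contra hyA
    -- Separate `y` from `A(B)` by `⟪x, ·⟫`; the supremum of `⟪x, ·⟫` on `A(B)` is `‖A† x‖`.
    obtain ⟨f, c, hfA, hfy⟩ := geometric_hahn_banach_closed_point
      ((convex_closedBall (0 : E) 1).linear_image (A : E →ₗ[ℝ] F))
      ((isCompact_closedBall (0 : E) 1).image A.continuous).isClosed hyA
    set x := (InnerProductSpace.toDual ℝ F).symm f
    have hf (v : F) : f v = ⟪x, v⟫ := by simp [x]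
    obtain ⟨z, hz, hxz⟩ := exists_mem_closedBall_inner_eq_norm (adjoint A x)
    have hAz : ⟪x, A z⟫ < c := hf (A z) ▸ hfA _ ⟨z, hz, rfl⟩
    rw [← adjoint_inner_left, hxz] at hAz
    linarith [hy x, hf y ▸ hfy]

end

namespace Matrix

variable {ι κ : Type*} [Fintype ι] [DecidableEq ι] [Fintype κ]

theorem sqrt_sum_inner_sq_eq_norm_toEuclideanLin {u : κ → EuclideanSpace ℝ ι} {U : Matrix ι κ ℝ}
    (hU : ∀ i j, U i j = u j i) (x : EuclideanSpace ℝ ι) :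
    √(∑ j, ⟪u j, x⟫ ^ 2) = ‖toEuclideanLin Uᴴ x‖ := by
  simp only [EuclideanSpace.norm_eq, Real.norm_eq_abs, sq_abs, toLpLin_apply,
    mulVec, dotProduct, conjTranspose_apply, star_trivial, hU,
    PiLp.inner_apply, RCLike.inner_apply, conj_trivial, mul_comm]

theorem volume_image_toEuclideanLin (S : Matrix ι ι ℝ) (s : Set (EuclideanSpace ℝ ι)) :
    volume (toEuclideanLin S '' s) = ENNReal.ofReal |S.det| * volume s := by
  rw [Measure.addHaar_image_linearMap, toEuclideanLin_eq_toLin_orthonormal, LinearMap.det_toLin]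

variable [DecidableEq κ]

theorem image_toEuclideanLin_closedBall (M : Matrix ι κ ℝ) :
    toEuclideanLin M '' Metric.closedBall 0 1 =
      {y | ∀ x, ⟪x, y⟫ ≤ ‖toEuclideanLin Mᴴ x‖} := by
  have := (LinearMap.toContinuousLinearMap (toEuclideanLin M)).image_closedBall_eq_setOf_inner_le
  rwa [← LinearMap.adjoint_toContinuousLinearMap, ← toEuclideanLin_conjTranspose_eq_adjoint] at this

theorem norm_toEuclideanLin_conjTranspose_sq (M : Matrix ι κ ℝ) (x : EuclideanSpace ℝ ι) :
    ‖toEuclideanLin Mᴴ x‖ ^ 2 = ⟪x, toEuclideanLin (M * Mᴴ) x⟫ := by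
  rw [toLpLin_mul_same, LinearMap.comp_apply, ← real_inner_self_eq_norm_sq,
    toEuclideanLin_conjTranspose_eq_adjoint, LinearMap.adjoint_inner_left]

theorem image_toEuclideanLin_closedBall_eq_of_mul_conjTranspose_eq {μ : Type*} [Fintype μ]
    [DecidableEq μ] {M : Matrix ι κ ℝ} {N : Matrix ι μ ℝ} (h : M * Mᴴ = N * Nᴴ) :
    toEuclideanLin M '' Metric.closedBall 0 1 = toEuclideanLin N '' Metric.closedBall 0 1 := by
  have hnorm (x : EuclideanSpace ℝ ι) : ‖toEuclideanLin Mᴴ x‖ = ‖toEuclideanLin Nᴴ x‖ := by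
    rw [← sq_eq_sq₀ (norm_nonneg _) (norm_nonneg _), norm_toEuclideanLin_conjTranspose_sq,
      norm_toEuclideanLin_conjTranspose_sq, h]
  simp only [image_toEuclideanLin_closedBall, hnorm]

end Matrix

theorem l2_sum_segments_general (n m : ℕ)
    (u : Fin m → EuclideanSpace ℝ (Fin n))
    (U : Matrix (Fin n) (Fin m) ℝ) (hU : ∀ i j, U i j = u j i)
    (K : Set (EuclideanSpace ℝ (Fin n)))
    (hK : K = {y : EuclideanSpace ℝ (Fin n) |
      ∀ x : EuclideanSpace ℝ (Fin n), ⟪x, y⟫ ≤ Real.sqrt (∑ i : Fin m, ⟪u i, x⟫ ^ 2)}) :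
    K = (Matrix.toEuclideanLin U) '' Metric.closedBall 0 1 ∧
    (∀ h : (U * U.conjTranspose).PosSemidef,
      K = (Matrix.toEuclideanLin h.sqrt) '' Metric.closedBall 0 1) ∧
    (volume K).toReal ^ 2 =
      (volume (Metric.closedBall (0 : EuclideanSpace ℝ (Fin n)) 1)).toReal ^ 2 *
        ∑ I : {s : Finset (Fin m) // s.card = n},
          (U.submatrix id (fun j : Fin n => ((I.1.orderIsoOfFin I.2) j : Fin m))).det ^ 2 := by
  have hUball : K = Matrix.toEuclideanLin U '' Metric.closedBall 0 1 := by
    simp only [hK, Matrix.image_toEuclideanLin_closedBall,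
      Matrix.sqrt_sum_inner_sq_eq_norm_toEuclideanLin hU]
  have hsqrtBall (h : (U * U.conjTranspose).PosSemidef) :
      K = Matrix.toEuclideanLin h.sqrt '' Metric.closedBall 0 1 := by
    rw [hUball]
    exact Matrix.image_toEuclideanLin_closedBall_eq_of_mul_conjTranspose_eq
      (by rw [h.conjTranspose_sqrt, h.sqrt_mul_self])
  refine ⟨hUball, hsqrtBall, ?_⟩
  have hpsd := Matrix.posSemidef_self_mul_conjTranspose U
  have hdet : hpsd.sqrt.det ^ 2 = (U * U.transpose).det := by
    rw [sq, ← Matrix.det_mul, hpsd.sqrt_mul_self, Matrix.conjTranspose_eq_transpose_of_trivial]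
  rw [hsqrtBall hpsd, Matrix.volume_image_toEuclideanLin, ENNReal.toReal_mul,
    ENNReal.toReal_ofReal (abs_nonneg _), mul_pow, sq_abs, hdet,
    Matrix.det_mul_transpose_eq_sum_det_sq, mul_comm]
  rfl

/-- The `ℓ₂`-sum `[-u₁,u₁] ⊕₂ ⋯ ⊕₂ [-u_m,u_m]` equals `U(B₂^m) = √(UU*)(B₂ⁿ)`, where `U`
is the `n × m` matrix with columns `u₁,…,u_m`, and its volume squared equals
`|B₂ⁿ|² · Σ_{|I|=n} det((uᵢ)_{i∈I})²` (Cauchy–Binet). The `ℓ₂`-sum is described as the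
body whose support function is `x ↦ √(Σᵢ ⟨uᵢ,x⟩²)`. -/
theorem l2_sum_segments (n m : ℕ) (hm : n ≤ m)
    (u : Fin m → EuclideanSpace ℝ (Fin n))
    (U : Matrix (Fin n) (Fin m) ℝ) (hU : ∀ i j, U i j = u j i)
    (K : Set (EuclideanSpace ℝ (Fin n)))
    (hK : K = {y : EuclideanSpace ℝ (Fin n) |
      ∀ x : EuclideanSpace ℝ (Fin n), ⟪x, y⟫ ≤ Real.sqrt (∑ i : Fin m, ⟪u i, x⟫ ^ 2)}) :
    K = (Matrix.toEuclideanLin U) '' Metric.closedBall 0 1 ∧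
    (∀ h : (U * U.conjTranspose).PosSemidef,
      K = (Matrix.toEuclideanLin h.sqrt) '' Metric.closedBall 0 1) ∧
    (volume K).toReal ^ 2 =
      (volume (Metric.closedBall (0 : EuclideanSpace ℝ (Fin n)) 1)).toReal ^ 2 *
        ∑ I : {s : Finset (Fin m) // s.card = n},
          (U.submatrix id (fun j : Fin n => ((I.1.orderIsoOfFin I.2) j : Fin m))).det ^ 2 :=
  l2_sum_segments_general n m u U hU K hK
end

section
/- Let A = T₁B₂ⁿ and B = T₂B₂ⁿ be ellipsoids (T₁, T₂ positive definite) and u ∈ S^{n-1}. Then (|A ⊕₂ B| / |P_{u^⊥}(A ⊕₂ B)|)² ≥ (|A| / |P_{u^⊥}A|)² + (|B| / |P_{u^⊥}B|)². -/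
/-!
Write `E(N) = N B` for the image of the unit ball under a matrix `N` of full row rank. It depends
only on the Gram matrix `N Nᵀ`, and its volume is `√det (N Nᵀ)` times that of the ball. The
`ℓ₂`-sum of `T₁B` and `T₂B` is the ellipsoid `[T₁ T₂] B`, with Gram matrix `T₁T₁ᵀ + T₂T₂ᵀ`.
In orthonormal coordinates on `u^⊥` the projection of `E(T)` is `E(R T)`, and a cofactor
computation gives `det (R M Rᵀ) = det M ⟪u, M⁻¹ u⟫` for `M = T Tᵀ`; hence
`(|E(T)| / |P_{u^⊥} E(T)|)² = (|Bⁿ| / |Bⁿ⁻¹|)² / ⟪u, M⁻¹ u⟫`. The theorem is then the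
superadditivity of `M ↦ ⟪u, M⁻¹ u⟫⁻¹` on positive definite matrices, which follows from
Cauchy–Schwarz since `⟪u, M⁻¹ u⟫⁻¹ = min {⟪w, M w⟫ | ⟪w, u⟫ = 1}`.
-/

open MeasureTheory
open scoped RealInnerProductSpace

/-- Support function of a set. -/
noncomputable def suppFn {n : ℕ} (K : Set (EuclideanSpace ℝ (Fin n)))
    (x : EuclideanSpace ℝ (Fin n)) : ℝ :=
  sSup ((fun y => ⟪x, y⟫) '' K)

/-- The `ℓ₂`-sum `K ⊕₂ L`: the convex body with support function `√(h_K² + h_L²)`. -/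
noncomputable def l2Sum {n : ℕ} (K L : Set (EuclideanSpace ℝ (Fin n))) :
    Set (EuclideanSpace ℝ (Fin n)) :=
  {y | ∀ x : EuclideanSpace ℝ (Fin n), ⟪x, y⟫ ≤ Real.sqrt (suppFn K x ^ 2 + suppFn L x ^ 2)}

open Matrix Metric
open scoped MatrixOrder

namespace Matrix

theorem det_mul_mul_transpose_eq_det_mul_dotProduct_inv_mulVec {K : Type*} [Field K] {m : ℕ}
    {R : Matrix (Fin m) (Fin (m + 1)) K} {u : Fin (m + 1) → K}
    (hR : R * Rᵀ = 1) (hRu : R *ᵥ u = 0) (hu : u ⬝ᵥ u = 1)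
    {M : Matrix (Fin (m + 1)) (Fin (m + 1)) K} (hM : IsUnit M.det) :
    (R * M * Rᵀ).det = M.det * (u ⬝ᵥ M⁻¹ *ᵥ u) := by
  -- `O` is orthogonal with rows `R₀, …, R_{m-1}, u`; `R M Rᵀ` is the last principal minor of
  -- `O M Oᵀ`, whose inverse `O M⁻¹ Oᵀ` has last diagonal entry `u ⬝ᵥ M⁻¹ *ᵥ u`.
  set O : Matrix (Fin (m + 1)) (Fin (m + 1)) K :=
    of fun i j => Fin.snoc (α := fun _ => K) (fun k => R k j) (u j) i
  have hOR : O.submatrix Fin.castSucc id = R := by ext i j; simp [O]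
  have hOu : O (Fin.last m) = u := by ext j; simp [O]
  have hOO : O * Oᵀ = 1 := by
    ext i j
    induction i using Fin.lastCases <;> induction j using Fin.lastCases
    · simpa [O, mul_apply, dotProduct] using hu
    · rw [one_apply_ne (Fin.castSucc_ne_last _).symm]
      simpa [O, mul_apply, mulVec, dotProduct, mul_comm] using congrFun hRu _
    · simpa [O, mul_apply, mulVec, dotProduct] using congrFun hRu _
    · simpa [O, mul_apply, one_apply] using congrFun (congrFun hR _) _
  set X := O * M * Oᵀ
  have hdetX : X.det = M.det := by
    have hdetO : O.det * O.det = 1 := by nth_rw 2 [← det_transpose O]; rw [← det_mul, hOO, det_one]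
    rw [det_mul, det_mul, det_transpose]
    linear_combination M.det * hdetO
  have hXinv : X⁻¹ = O * M⁻¹ * Oᵀ := by
    refine inv_eq_right_inv ?_
    simp only [X, Matrix.mul_assoc, ← Matrix.mul_assoc Oᵀ, mul_eq_one_comm.1 hOO, Matrix.one_mul,
      mul_nonsing_inv_cancel_left _ _ hM, hOO]
  have hminor : X.submatrix Fin.castSucc Fin.castSucc = R * M * Rᵀ := by
    rw [← hOR]
    ext i j
    simp [X, mul_apply]
  have hcorner : X⁻¹ (Fin.last m) (Fin.last m) = u ⬝ᵥ M⁻¹ *ᵥ u := by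
    rw [hXinv, mul_mul_apply, transpose_transpose, hOu]
  have hadj : X.adjugate (Fin.last m) (Fin.last m) = (R * M * Rᵀ).det := by
    rw [adjugate_fin_succ_eq_det_submatrix, Fin.succAbove_last, hminor]
    simp [← two_mul, pow_mul]
  rw [← hcorner, inv_def, smul_apply, hadj, hdetX, Ring.inverse_eq_inv', smul_eq_mul,
    mul_inv_cancel_left₀ hM.ne_zero]

section PosDef

variable {n : Type*} [Fintype n] [DecidableEq n] {M M₁ M₂ : Matrix n n ℝ}

theorem PosDef.sq_dotProduct_le_mul_inv (hM : M.PosDef) (u w : n → ℝ) :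
    (w ⬝ᵥ u) ^ 2 ≤ (w ⬝ᵥ M *ᵥ w) * (u ⬝ᵥ M⁻¹ *ᵥ u) := by
  have hsymm : Mᵀ = M := by simpa using hM.isHermitian.eq
  have hMM : M *ᵥ M⁻¹ *ᵥ u = u := by
    rw [mulVec_mulVec, mul_nonsing_inv _ hM.det_pos.ne'.isUnit, one_mulVec]
  have := LinearMap.BilinForm.apply_mul_apply_le_of_forall_zero_le (toLinearMap₂' ℝ M)
    (fun x => by simpa [toLinearMap₂'_apply'] using hM.posSemidef.dotProduct_mulVec_nonneg x)
    w (M⁻¹ *ᵥ u)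
  simp only [toLinearMap₂'_apply', hMM] at this
  rwa [dotProduct_mulVec, ← mulVec_transpose, hsymm, hMM, dotProduct_comm u, ← sq,
    dotProduct_comm (M⁻¹ *ᵥ u)] at this

theorem PosDef.inv_dotProduct_inv_mulVec_add_le (h₁ : M₁.PosDef) (h₂ : M₂.PosDef) {u : n → ℝ}
    (hu : u ≠ 0) :
    (u ⬝ᵥ M₁⁻¹ *ᵥ u)⁻¹ + (u ⬝ᵥ M₂⁻¹ *ᵥ u)⁻¹ ≤ (u ⬝ᵥ (M₁ + M₂)⁻¹ *ᵥ u)⁻¹ := by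
  -- With `w = (M₁ + M₂)⁻¹ u`, `s = w ⬝ᵥ u` and `sᵢ = u ⬝ᵥ Mᵢ⁻¹ u`, Cauchy–Schwarz gives
  -- `s² / sᵢ ≤ w ⬝ᵥ Mᵢ w`, and these two bounds sum to `s`.
  have h := h₁.add h₂
  set w := (M₁ + M₂)⁻¹ *ᵥ u
  have hs₁ : 0 < u ⬝ᵥ M₁⁻¹ *ᵥ u := by simpa using h₁.inv.dotProduct_mulVec_pos hu
  have hs₂ : 0 < u ⬝ᵥ M₂⁻¹ *ᵥ u := by simpa using h₂.inv.dotProduct_mulVec_pos hu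
  have hs : 0 < w ⬝ᵥ u := by rw [dotProduct_comm]; simpa using h.inv.dotProduct_mulVec_pos hu
  have hsum : w ⬝ᵥ M₁ *ᵥ w + w ⬝ᵥ M₂ *ᵥ w = w ⬝ᵥ u := by
    rw [← dotProduct_add, ← add_mulVec, mulVec_mulVec,
      mul_nonsing_inv _ h.det_pos.ne'.isUnit, one_mulVec]
  have hw₁ := h₁.sq_dotProduct_le_mul_inv u w
  have hw₂ := h₂.sq_dotProduct_le_mul_inv u w
  rw [← div_le_iff₀ hs₁] at hw₁
  rw [← div_le_iff₀ hs₂] at hw₂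
  rw [dotProduct_comm u w]
  calc (u ⬝ᵥ M₁⁻¹ *ᵥ u)⁻¹ + (u ⬝ᵥ M₂⁻¹ *ᵥ u)⁻¹
      = ((w ⬝ᵥ u) ^ 2 / (u ⬝ᵥ M₁⁻¹ *ᵥ u) + (w ⬝ᵥ u) ^ 2 / (u ⬝ᵥ M₂⁻¹ *ᵥ u)) /
          (w ⬝ᵥ u) ^ 2 := by
        field_simp
    _ ≤ (w ⬝ᵥ u) / (w ⬝ᵥ u) ^ 2 := by gcongr; linarith
    _ = (w ⬝ᵥ u)⁻¹ := by field_simp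

end PosDef

theorem fromCols_mul_transpose_fromCols {α ι κ κ' : Type*} [Semiring α] [Fintype κ] [Fintype κ']
    (N : Matrix ι κ α) (N' : Matrix ι κ' α) :
    fromCols N N' * (fromCols N N')ᵀ = N * Nᵀ + N' * N'ᵀ := by
  rw [transpose_fromCols, fromCols_mul_fromRows]

theorem posDef_mul_transpose_self {n : Type*} [Fintype n] [DecidableEq n]
    {T : Matrix n n ℝ} (hT : IsUnit T.det) : (T * Tᵀ).PosDef := by
  simpa using PosDef.one.mul_mul_conjTranspose_same
    (vecMul_injective_iff_isUnit.2 ((isUnit_iff_isUnit_det T).2 hT))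

end Matrix

theorem sSup_inner_image_closedBall {E : Type*} [NormedAddCommGroup E] [InnerProductSpace ℝ E]
    (v : E) : sSup ((fun y => ⟪v, y⟫) '' closedBall 0 1) = ‖v‖ := by
  refine IsGreatest.csSup_eq ⟨?_, ?_⟩
  · rcases eq_or_ne v 0 with rfl | hv
    · exact ⟨0, mem_closedBall_self zero_le_one, by simp⟩
    · refine ⟨‖v‖⁻¹ • v, by simp [norm_smul, hv], ?_⟩
      simp [real_inner_smul_right, hv, pow_two]
  · rintro _ ⟨y, hy, rfl⟩
    calc ⟪v, y⟫ ≤ ‖v‖ * ‖y‖ := real_inner_le_norm v y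
      _ ≤ ‖v‖ := mul_le_of_le_one_right (norm_nonneg v) (by simpa using hy)

section Ellipsoid

variable {ι κ κ' : Type*} [Fintype ι] [DecidableEq ι] [Fintype κ] [DecidableEq κ]
  [Fintype κ'] [DecidableEq κ']

theorem Matrix.inner_toEuclideanLin (N : Matrix ι κ ℝ) (x : EuclideanSpace ℝ ι)
    (y : EuclideanSpace ℝ κ) : ⟪x, toEuclideanLin N y⟫ = ⟪toEuclideanLin Nᵀ x, y⟫ := by
  rw [← conjTranspose_eq_transpose_of_trivial, toEuclideanLin_conjTranspose_eq_adjoint,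
    LinearMap.adjoint_inner_left]

theorem Matrix.norm_toEuclideanLin_transpose_sq (N : Matrix ι κ ℝ) (z : EuclideanSpace ℝ ι) :
    ‖toEuclideanLin Nᵀ z‖ ^ 2 = ⟪z, toEuclideanLin (N * Nᵀ) z⟫ := by
  rw [toLpLin_mul_same, LinearMap.comp_apply, inner_toEuclideanLin, real_inner_self_eq_norm_sq]

theorem suppFn_image_closedBall {n : ℕ} (N : Matrix (Fin n) κ ℝ) (x : EuclideanSpace ℝ (Fin n)) :
    suppFn (toEuclideanLin N '' closedBall 0 1) x = ‖toEuclideanLin Nᵀ x‖ := by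
  simp only [suppFn, Set.image_image, inner_toEuclideanLin, sSup_inner_image_closedBall]

theorem image_closedBall_eq_setOf_inner_le (N : Matrix ι κ ℝ) (hN : IsUnit (N * Nᵀ).det) :
    toEuclideanLin N '' closedBall 0 1 = {y | ∀ z, ⟪z, y⟫ ≤ ‖toEuclideanLin Nᵀ z‖} := by
  ext y
  constructor
  · rintro ⟨x, hx, rfl⟩ z
    rw [inner_toEuclideanLin]
    calc _ ≤ ‖toEuclideanLin Nᵀ z‖ * ‖x‖ := real_inner_le_norm _ _
      _ ≤ _ := mul_le_of_le_one_right (norm_nonneg _) (by simpa using hx)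
  · intro hy
    -- `x = Nᵀ (N Nᵀ)⁻¹ y` is a preimage of `y` with `‖x‖² = ⟪(N Nᵀ)⁻¹ y, y⟫ ≤ ‖x‖`.
    set w := toEuclideanLin (N * Nᵀ)⁻¹ y
    have hNx : toEuclideanLin N (toEuclideanLin Nᵀ w) = y := by
      rw [← LinearMap.comp_apply, ← toLpLin_mul_same, ← LinearMap.comp_apply, ← toLpLin_mul_same,
        mul_nonsing_inv _ hN, toLpLin_one, LinearMap.id_apply]
    refine ⟨toEuclideanLin Nᵀ w, ?_, hNx⟩
    have h := hy w
    rw [← hNx, inner_toEuclideanLin, real_inner_self_eq_norm_sq] at h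
    rw [mem_closedBall_zero_iff]
    nlinarith [norm_nonneg (toEuclideanLin Nᵀ w)]

theorem image_closedBall_eq_of_mul_transpose_eq {N : Matrix ι κ ℝ} {N' : Matrix ι κ' ℝ}
    (h : N * Nᵀ = N' * N'ᵀ) (hN : IsUnit (N * Nᵀ).det) :
    toEuclideanLin N '' closedBall 0 1 = toEuclideanLin N' '' closedBall 0 1 := by
  have hnorm (z : EuclideanSpace ℝ ι) : ‖toEuclideanLin Nᵀ z‖ = ‖toEuclideanLin N'ᵀ z‖ := by
    rw [← pow_left_inj₀ (norm_nonneg _) (norm_nonneg _) two_ne_zero,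
      norm_toEuclideanLin_transpose_sq, norm_toEuclideanLin_transpose_sq, h]
  rw [image_closedBall_eq_setOf_inner_le N hN, image_closedBall_eq_setOf_inner_le N' (h ▸ hN)]
  simp only [hnorm]

theorem volume_image_closedBall (N : Matrix ι κ ℝ) (hN : (N * Nᵀ).PosDef) :
    volume (toEuclideanLin N '' closedBall 0 1) =
      ENNReal.ofReal √(N * Nᵀ).det * volume (closedBall (0 : EuclideanSpace ℝ ι) 1) := by
  set W := CFC.sqrt (N * Nᵀ)
  have hW : Wᵀ = W := by
    simpa using (CFC.sqrt_nonneg (N * Nᵀ)).posSemidef.isHermitian.eq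
  have hWW : N * Nᵀ = W * Wᵀ := by rw [hW, CFC.sqrt_mul_sqrt_self _ hN.posSemidef.nonneg]
  have hdetW : W.det = √(N * Nᵀ).det := by
    rw [hN.posSemidef.det_sqrt, RCLike.sqrt_of_nonneg hN.posSemidef.det_nonneg]
    rfl
  rw [image_closedBall_eq_of_mul_transpose_eq hWW hN.det_pos.ne'.isUnit,
    Measure.addHaar_image_linearMap, toEuclideanLin_eq_toLin_orthonormal, LinearMap.det_toLin,
    hdetW, abs_of_nonneg (Real.sqrt_nonneg _)]

theorem exists_matrix_orthogonalProjectionOnto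
    (K : Submodule ℝ (EuclideanSpace ℝ ι)) {m : ℕ} (hK : Module.finrank ℝ K = m) :
    ∃ R : Matrix (Fin m) ι ℝ, R * Rᵀ = 1 ∧ (∀ x ∈ Kᗮ, toEuclideanLin R x = 0) ∧
      ∀ s, volume (K.orthogonalProjectionOnto '' s) = volume (toEuclideanLin R '' s) := by
  set b := (stdOrthonormalBasis ℝ K).reindex (finCongr hK)
  set R : Matrix (Fin m) ι ℝ := of fun i => (b i : EuclideanSpace ℝ ι).ofLp
  have hR (x : EuclideanSpace ℝ ι) :
      toEuclideanLin R x = b.repr (K.orthogonalProjectionOnto x) := by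
    ext i
    simp [R, b.repr_apply_apply, EuclideanSpace.inner_eq_star_dotProduct, mulVec, dotProduct_comm]
  refine ⟨R, ?_, fun x hx => ?_, fun s => ?_⟩
  · ext i j
    rw [one_apply, ← b.inner_eq_ite, Submodule.coe_inner, EuclideanSpace.inner_eq_star_dotProduct]
    simp [R, mul_apply, dotProduct, mul_comm]
  · rw [hR, K.orthogonalProjectionOnto_eq_zero_iff.2 hx, map_zero]
  · have hs : toEuclideanLin R '' s =
        b.measurableEquiv.symm ⁻¹' (K.orthogonalProjectionOnto '' s) := by
      rw [← MeasurableEquiv.image_eq_preimage_symm, Set.image_image]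
      simp only [hR]; rfl
    rw [hs, b.measurePreserving_measurableEquiv.symm.measure_preimage_equiv]

theorem l2Sum_image_closedBall {n : ℕ} (T : Matrix (Fin n) κ ℝ) (T' : Matrix (Fin n) κ' ℝ)
    (h : IsUnit (T * Tᵀ + T' * T'ᵀ).det) :
    l2Sum (toEuclideanLin T '' closedBall 0 1) (toEuclideanLin T' '' closedBall 0 1) =
      toEuclideanLin (fromCols T T') '' closedBall 0 1 := by
  have hG := fromCols_mul_transpose_fromCols T T'
  rw [image_closedBall_eq_setOf_inner_le (fromCols T T') (by rwa [hG])]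
  refine Set.ext fun y => forall_congr' fun z => ?_
  rw [suppFn_image_closedBall, suppFn_image_closedBall, norm_toEuclideanLin_transpose_sq,
    norm_toEuclideanLin_transpose_sq, ← inner_add_right, ← LinearMap.add_apply, ← map_add, ← hG,
    ← norm_toEuclideanLin_transpose_sq, Real.sqrt_sq (norm_nonneg _)]

theorem sq_volume_div_volume_orthogonalProjectionOnto_image {m : ℕ}
    {u : EuclideanSpace ℝ (Fin (m + 1))} (hu : ‖u‖ = 1) (T : Matrix (Fin (m + 1)) κ ℝ) (hT : (T * Tᵀ).PosDef) :
    ((volume (toEuclideanLin T '' closedBall 0 1)).toReal /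
        (volume ((Submodule.span ℝ {u})ᗮ.orthogonalProjectionOnto ''
          (toEuclideanLin T '' closedBall 0 1))).toReal) ^ 2 =
      ((volume (closedBall (0 : EuclideanSpace ℝ (Fin (m + 1))) 1)).toReal /
        (volume (closedBall (0 : EuclideanSpace ℝ (Fin m)) 1)).toReal) ^ 2 /
        (u.ofLp ⬝ᵥ (T * Tᵀ)⁻¹ *ᵥ u.ofLp) := by
  have hu0 : u ≠ 0 := by rintro rfl; simp at hu
  have hK : Module.finrank ℝ (Submodule.span ℝ {u})ᗮ = m := by
    have := (Submodule.span ℝ {u}).finrank_add_finrank_orthogonal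
    rw [finrank_span_singleton hu0, finrank_euclideanSpace_fin] at this
    omega
  obtain ⟨R, hRR, hRK, hvol⟩ := exists_matrix_orthogonalProjectionOnto _ hK
  have hRu : R *ᵥ u.ofLp = 0 := congrArg WithLp.ofLp
    (hRK u (Submodule.le_orthogonal_orthogonal _ (Submodule.mem_span_singleton_self u)))
  have huu : u.ofLp ⬝ᵥ u.ofLp = 1 := by
    have h := real_inner_self_eq_norm_sq u
    rw [hu, EuclideanSpace.inner_eq_star_dotProduct, star_trivial] at h
    simpa using h
  have hRT : R * T * (R * T)ᵀ = R * (T * Tᵀ) * Rᵀ := by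
    simp only [transpose_mul, Matrix.mul_assoc]
  have hRTpos : (R * T * (R * T)ᵀ).PosDef := by
    rw [hRT]
    refine hT.mul_mul_conjTranspose_same (Function.LeftInverse.injective (g := (· ᵥ* Rᵀ)) ?_)
    intro x
    simp [vecMul_vecMul, hRR]
  rw [hvol, ← Set.image_comp, ← LinearMap.coe_comp, ← toLpLin_mul_same,
    volume_image_closedBall T hT, volume_image_closedBall (R * T) hRTpos, hRT,
    det_mul_mul_transpose_eq_det_mul_dotProduct_inv_mulVec hRR hRu huu hT.det_pos.ne'.isUnit]
  have hd := hT.det_pos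
  have hq : 0 < u.ofLp ⬝ᵥ (T * Tᵀ)⁻¹ *ᵥ u.ofLp := by
    simpa using hT.inv.dotProduct_mulVec_pos (x := u.ofLp) (by simpa using hu0)
  have hω : (volume (closedBall (0 : EuclideanSpace ℝ (Fin m)) 1)).toReal ≠ 0 :=
    ENNReal.toReal_ne_zero.2
      ⟨(measure_closedBall_pos volume 0 one_pos).ne', measure_closedBall_lt_top.ne⟩
  simp only [ENNReal.toReal_mul, ENNReal.toReal_ofReal (Real.sqrt_nonneg _), div_pow, mul_pow,
    Real.sq_sqrt hd.le, Real.sq_sqrt (mul_pos hd hq).le]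
  field_simp

end Ellipsoid

/-- For ellipsoids `A = T₁B₂ⁿ`, `B = T₂B₂ⁿ` (`T₁, T₂` positive definite) and `u ∈ Sⁿ⁻¹`:
`(|A⊕₂B| / |P_{u⊥}(A⊕₂B)|)² ≥ (|A| / |P_{u⊥}A|)² + (|B| / |P_{u⊥}B|)²`. -/
theorem ellipsoid_l2_sum_proj_ineq (n : ℕ)
    (T₁ T₂ : Matrix (Fin n) (Fin n) ℝ) (hT₁ : T₁.PosDef) (hT₂ : T₂.PosDef)
    (u : EuclideanSpace ℝ (Fin n)) (hu : ‖u‖ = 1)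
    (A B : Set (EuclideanSpace ℝ (Fin n)))
    (hA : A = (Matrix.toEuclideanLin T₁) '' Metric.closedBall 0 1)
    (hB : B = (Matrix.toEuclideanLin T₂) '' Metric.closedBall 0 1) :
    ((volume (l2Sum A B)).toReal /
          (volume ((Submodule.orthogonalProjection ((Submodule.span ℝ {u})ᗮ)) '' l2Sum A B)).toReal) ^ 2 ≥
      ((volume A).toReal /
          (volume ((Submodule.orthogonalProjection ((Submodule.span ℝ {u})ᗮ)) '' A)).toReal) ^ 2 +
        ((volume B).toReal /
          (volume ((Submodule.orthogonalProjection ((Submodule.span ℝ {u})ᗮ)) '' B)).toReal) ^ 2 := by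
  obtain ⟨m, rfl⟩ : ∃ m, n = m + 1 :=
    Nat.exists_eq_succ_of_ne_zero (by rintro rfl; simp [Subsingleton.elim u 0] at hu)
  have hM₁ := posDef_mul_transpose_self hT₁.det_pos.ne'.isUnit
  have hM₂ := posDef_mul_transpose_self hT₂.det_pos.ne'.isUnit
  have hM := hM₁.add hM₂
  subst hA hB
  rw [l2Sum_image_closedBall T₁ T₂ hM.det_pos.ne'.isUnit,
    sq_volume_div_volume_orthogonalProjectionOnto_image hu _
      (by rwa [fromCols_mul_transpose_fromCols]),
    sq_volume_div_volume_orthogonalProjectionOnto_image hu _ hM₁,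
    sq_volume_div_volume_orthogonalProjectionOnto_image hu _ hM₂, fromCols_mul_transpose_fromCols]
  have hu0 : u.ofLp ≠ 0 := by rintro h; simp [show u = 0 from congrArg (WithLp.toLp 2) h] at hu
  simp only [div_eq_mul_inv _ (_ ⬝ᵥ _), ge_iff_le, ← mul_add]
  exact mul_le_mul_of_nonneg_left (hM₁.inv_dotProduct_inv_mulVec_add_le hM₂ hu0) (sq_nonneg _)
end

section
/- For an ellipsoid ℰ = TB₂ⁿ with T positive definite, and any u ∈ S^{n-1}, one has |P_{u^⊥}ℰ|_{n-1} / (|ℰ| · ‖u‖_ℰ) = |B₂^{n-1}| / |B₂ⁿ|, where ‖u‖_ℰ = |T^{-1}u| is the Minkowski functional of ℰ. -/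
/-!
Put `w = T⁻¹u`, so that `T` maps the line `ℝw` onto `ℝu`. Since `P_{u⊥}T` kills `w`, the shadow
`P_{u⊥}ℰ` is the image of the unit ball of `w⊥` under the compression `P_{u⊥}T : w⊥ → u⊥`. In
orthonormal bases adapted to `ℝw ⊕ w⊥` and `ℝu ⊕ u⊥` the matrix of `T` is block triangular with
`1 × 1` block `1/|w|`, so the compression scales `(n-1)`-volume by `|det T| · |w|`, whereas
`|ℰ| = |det T| · |B₂ⁿ|`.
-/

open MeasureTheory Module Metric

namespace Submodule

variable {𝕜 V : Type*} [RCLike 𝕜] [NormedAddCommGroup V] [InnerProductSpace 𝕜 V]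

theorem orthogonalProjectionOnto_image_closedBall (K : Submodule 𝕜 V) [K.HasOrthogonalProjection]
    (r : ℝ) : K.orthogonalProjectionOnto '' closedBall (0 : V) r = closedBall (0 : K) r := by
  ext y
  constructor
  · rintro ⟨x, hx, rfl⟩
    simp only [mem_closedBall, dist_zero_right] at hx ⊢
    exact (K.norm_orthogonalProjectionOnto_apply_le x).trans hx
  · intro hy
    refine ⟨y, ?_, K.orthogonalProjectionOnto_mem_subspace_eq_self y⟩
    simpa using hy

theorem finrank_orthogonal_eq_of_finrank_eq [FiniteDimensional 𝕜 V] {K K' : Submodule 𝕜 V}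
    (h : finrank 𝕜 K = finrank 𝕜 K') : finrank 𝕜 Kᗮ = finrank 𝕜 K'ᗮ := by
  have := K.finrank_add_finrank_orthogonal
  have := K'.finrank_add_finrank_orthogonal
  omega

end Submodule

namespace LinearMap

variable {V : Type*} [NormedAddCommGroup V] [InnerProductSpace ℝ V] [FiniteDimensional ℝ V]

noncomputable def compression (L : V →ₗ[ℝ] V) (K K' : Submodule ℝ V) : K →ₗ[ℝ] K' :=
  K'.orthogonalProjectionOnto.toLinearMap ∘ₗ L ∘ₗ K.subtype

theorem compression_comp_orthogonalProjectionOnto (L : V →ₗ[ℝ] V) {K K' : Submodule ℝ V}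
    (hL : ∀ x ∈ K, L x ∈ K'ᗮ) :
    L.compression Kᗮ K' ∘ₗ Kᗮ.orthogonalProjectionOnto.toLinearMap =
      K'.orthogonalProjectionOnto.toLinearMap ∘ₗ L := by
  ext x
  have hx : K'.orthogonalProjectionOnto (L (K.starProjection x)) = 0 :=
    K'.orthogonalProjectionOnto_eq_zero_iff.mpr (hL _ (K.starProjection_apply_mem x))
  simp [compression, Submodule.orthogonalProjectionOnto_orthogonal, hx]

theorem abs_det_eq_normDet_compression_mul (L : V →ₗ[ℝ] V) {K K' : Submodule ℝ V}
    (hK : finrank ℝ K = finrank ℝ K') (hL : ∀ x ∈ K, L x ∈ K') :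
    |L.det| = (L.compression K K').normDet * (L.compression Kᗮ K'ᗮ).normDet := by
  let bK := stdOrthonormalBasis ℝ K
  let bK' := (stdOrthonormalBasis ℝ K').reindex (finCongr hK.symm)
  let bKo := stdOrthonormalBasis ℝ Kᗮ
  let bK'o := (stdOrthonormalBasis ℝ K'ᗮ).reindex
    (finCongr (Submodule.finrank_orthogonal_eq_of_finrank_eq hK).symm)
  let b := (bK.prod bKo).map K.orthogonalDecomposition.symm
  let b' := (bK'.prod bK'o).map K'.orthogonalDecomposition.symm
  set M := toMatrix b.toBasis b'.toBasis L
  have hM : ∀ p q, M p q = inner ℝ (b' p) (L (b q)) := fun p q => by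
    simp only [M, toMatrix_apply, OrthonormalBasis.coe_toBasis_repr_apply,
      OrthonormalBasis.repr_apply_apply, OrthonormalBasis.coe_toBasis]
  have h21 : M.toBlocks₂₁ = 0 := by
    ext i j
    show M _ _ = _
    rw [hM]
    simpa [b, b'] using K'.inner_left_of_mem_orthogonal (hL _ (bK j).2) (bK'o i).2
  have h11 : M.toBlocks₁₁ = toMatrix bK.toBasis bK'.toBasis (L.compression K K') := by
    ext i j
    show M _ _ = _
    simp [hM, toMatrix_apply, OrthonormalBasis.repr_apply_apply, b, b', compression]
  have h22 : M.toBlocks₂₂ = toMatrix bKo.toBasis bK'o.toBasis (L.compression Kᗮ K'ᗮ) := by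
    ext i j
    show M _ _ = _
    simp [hM, toMatrix_apply, OrthonormalBasis.repr_apply_apply, b, b', compression]
  rw [← normDet_eq_abs_det, normDet_eq_norm_det_toMatrix L b b',
    normDet_eq_norm_det_toMatrix _ bK bK', normDet_eq_norm_det_toMatrix _ bKo bK'o, ← h11, ← h22,
    ← norm_mul, ← Matrix.det_fromBlocks_zero₂₁, ← h21, Matrix.fromBlocks_toBlocks]

end LinearMap

section NormDet

variable {𝕜 U W : Type*} [RCLike 𝕜] [NormedAddCommGroup U] [InnerProductSpace 𝕜 U]
  [FiniteDimensional 𝕜 U] [NormedAddCommGroup W] [InnerProductSpace 𝕜 W]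

theorem LinearMap.normDet_eq_norm_apply_one (g : 𝕜 →ₗ[𝕜] W) : g.normDet = ‖g 1‖ := by
  have h := g.normDet_sq_eq_det_gram (OrthonormalBasis.singleton (Fin 1) 𝕜)
  rw [Matrix.det_unique] at h
  simp only [Matrix.gram, OrthonormalBasis.singleton_apply, Matrix.of_apply,
    inner_self_eq_norm_sq_to_K] at h
  norm_cast at h
  exact (sq_eq_sq₀ g.normDet_nonneg (norm_nonneg _)).mp h

theorem LinearMap.normDet_eq_norm_div_norm (f : U →ₗ[𝕜] W) (hU : finrank 𝕜 U = 1) {x : U}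
    (hx : x ≠ 0) : f.normDet = ‖f x‖ / ‖x‖ := by
  have hunit : ‖(‖x‖⁻¹ : 𝕜) • x‖ = 1 := by
    rw [norm_smul, norm_inv, RCLike.norm_ofReal, abs_norm,
      inv_mul_cancel₀ (norm_ne_zero_iff.mpr hx)]
  let e := LinearIsometry.toSpanSingleton 𝕜 U hunit
  have hcomp := normDet_comp_of_finrank_eq e.toLinearMap f (by simp [hU])
  rw [e.normDet_eq_one, mul_one] at hcomp
  rw [← hcomp, normDet_eq_norm_apply_one]
  simp [e, norm_smul, div_eq_inv_mul]

end NormDet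

section Volume

variable {U W : Type*} [NormedAddCommGroup U] [InnerProductSpace ℝ U] [FiniteDimensional ℝ U]
  [NormedAddCommGroup W] [InnerProductSpace ℝ W] [FiniteDimensional ℝ W]

variable [MeasurableSpace U] [BorelSpace U] [MeasurableSpace W] [BorelSpace W]

theorem LinearMap.volume_image_eq_normDet_mul (f : U →ₗ[ℝ] W) (h : finrank ℝ U = finrank ℝ W)
    (s : Set U) : volume (f '' s) = ENNReal.ofReal f.normDet * volume s := by
  rw [← InnerProductSpace.euclideanHausdorffMeasure_eq_volume (V := W), ← h,
    f.euclideanHausdorffMeasure_image_eq_normDet_mul_volume]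

theorem volume_closedBall_zero_eq_of_finrank_eq (h : finrank ℝ U = finrank ℝ W) (r : ℝ) :
    volume (closedBall (0 : U) r) = volume (closedBall (0 : W) r) := by
  let e : U ≃ₗᵢ[ℝ] W :=
    ((stdOrthonormalBasis ℝ U).reindex (finCongr h)).repr.trans (stdOrthonormalBasis ℝ W).repr.symm
  rw [← e.measurePreserving.measure_preimage measurableSet_closedBall.nullMeasurableSet,
    e.preimage_closedBall, map_zero]

theorem volume_orthogonalProjectionOnto_image_linearMap_closedBall (L : U →ₗ[ℝ] U) {u w : U}
    (hu : ‖u‖ = 1) (hLw : L w = u) :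
    volume ((ℝ ∙ u)ᗮ.orthogonalProjectionOnto '' (L '' closedBall 0 1)) =
      ENNReal.ofReal (|L.det| * ‖w‖) * volume (closedBall (0 : (ℝ ∙ u)ᗮ) 1) := by
  have hu0 : u ≠ 0 := norm_ne_zero_iff.mp (by rw [hu]; exact one_ne_zero)
  have hw0 : w ≠ 0 := by rintro rfl; exact hu0 (by rw [← hLw, map_zero])
  have hLK : ∀ x ∈ ℝ ∙ w, L x ∈ ℝ ∙ u := by
    intro x hx
    obtain ⟨a, rfl⟩ := Submodule.mem_span_singleton.mp hx
    rw [map_smul, hLw]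
    exact Submodule.smul_mem _ a (Submodule.mem_span_singleton_self u)
  have hrank : finrank ℝ (ℝ ∙ w) = finrank ℝ (ℝ ∙ u) := by
    rw [finrank_span_singleton hw0, finrank_span_singleton hu0]
  have hrank' := Submodule.finrank_orthogonal_eq_of_finrank_eq hrank
  have hshadow : (ℝ ∙ u)ᗮ.orthogonalProjectionOnto '' (L '' closedBall 0 1) =
      L.compression (ℝ ∙ w)ᗮ (ℝ ∙ u)ᗮ '' closedBall 0 1 := by
    have hL' : ∀ x ∈ ℝ ∙ w, L x ∈ (ℝ ∙ u)ᗮᗮ := by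
      simpa only [Submodule.orthogonal_orthogonal] using hLK
    rw [Set.image_image, ← (ℝ ∙ w)ᗮ.orthogonalProjectionOnto_image_closedBall, Set.image_image]
    exact congr_arg (· '' closedBall 0 1)
      (congr_arg DFunLike.coe (L.compression_comp_orthogonalProjectionOnto hL')).symm
  have hnormDet : (L.compression (ℝ ∙ w)ᗮ (ℝ ∙ u)ᗮ).normDet = |L.det| * ‖w‖ := by
    have hline : (L.compression (ℝ ∙ w) (ℝ ∙ u)).normDet = ‖w‖⁻¹ := by
      rw [LinearMap.normDet_eq_norm_div_norm _ (finrank_span_singleton hw0)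
        (x := ⟨w, Submodule.mem_span_singleton_self w⟩) (by simpa using hw0)]
      simp [LinearMap.compression, hLw, hu,
        Submodule.starProjection_eq_self_iff.mpr (Submodule.mem_span_singleton_self u)]
    rw [L.abs_det_eq_normDet_compression_mul hrank hLK, hline]
    field_simp
  rw [hshadow, LinearMap.volume_image_eq_normDet_mul _ hrank', hnormDet,
    volume_closedBall_zero_eq_of_finrank_eq hrank']

end Volume

theorem ellipsoid_projection_formula_general (n : ℕ)
    (T : Matrix (Fin n) (Fin n) ℝ) (hT : T.PosDef)
    (u : EuclideanSpace ℝ (Fin n)) (hu : ‖u‖ = 1)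
    (E : Set (EuclideanSpace ℝ (Fin n)))
    (hE : E = (Matrix.toEuclideanLin T) '' Metric.closedBall 0 1) :
    (volume ((Submodule.orthogonalProjectionOnto ((Submodule.span ℝ {u})ᗮ)) '' E)).toReal /
        ((volume E).toReal * ‖Matrix.toEuclideanLin T⁻¹ u‖) =
      (volume (Metric.closedBall (0 : EuclideanSpace ℝ (Fin (n - 1))) 1)).toReal /
        (volume (Metric.closedBall (0 : EuclideanSpace ℝ (Fin n)) 1)).toReal := by
  have hu0 : u ≠ 0 := norm_ne_zero_iff.mp (by rw [hu]; exact one_ne_zero)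
  have hdet : LinearMap.det (Matrix.toEuclideanLin T) = T.det := by
    rw [Matrix.toEuclideanLin, Matrix.toLpLin_eq_toLin, LinearMap.det_toLin]
  have hLw : Matrix.toEuclideanLin T (Matrix.toEuclideanLin T⁻¹ u) = u := by
    simp [Matrix.toLpLin_apply, Matrix.mulVec_mulVec,
      Matrix.mul_nonsing_inv T (isUnit_iff_ne_zero.mpr hT.det_pos.ne')]
  have hrank : finrank ℝ (ℝ ∙ u)ᗮ = finrank ℝ (EuclideanSpace ℝ (Fin (n - 1))) := by
    have := (ℝ ∙ u).finrank_add_finrank_orthogonal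
    rw [finrank_span_singleton hu0] at this
    simp only [finrank_euclideanSpace_fin] at this ⊢
    omega
  have hk : |T.det| * ‖Matrix.toEuclideanLin T⁻¹ u‖ ≠ 0 := by
    refine mul_ne_zero (abs_ne_zero.mpr hT.det_pos.ne') (norm_ne_zero_iff.mpr ?_)
    rintro h
    exact hu0 (by rw [← hLw, h, map_zero])
  subst hE
  rw [volume_orthogonalProjectionOnto_image_linearMap_closedBall _ hu hLw, hdet,
    volume_closedBall_zero_eq_of_finrank_eq hrank, Measure.addHaar_image_linearMap, hdet,
    ENNReal.toReal_mul, ENNReal.toReal_mul, ENNReal.toReal_ofReal (by positivity),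
    ENNReal.toReal_ofReal (by positivity), mul_right_comm |T.det| _ ‖_‖, mul_div_mul_left _ _ hk]

/-- For an ellipsoid `ℰ = TB₂ⁿ` (`T` positive definite) and `u ∈ Sⁿ⁻¹`:
`|P_{u⊥}ℰ|_{n-1} / (|ℰ| · ‖u‖_ℰ) = |B₂^{n-1}| / |B₂ⁿ|`, where `‖u‖_ℰ = |T⁻¹u|`. -/
theorem ellipsoid_projection_formula (n : ℕ) (hn : 1 ≤ n)
    (T : Matrix (Fin n) (Fin n) ℝ) (hT : T.PosDef)
    (u : EuclideanSpace ℝ (Fin n)) (hu : ‖u‖ = 1)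
    (E : Set (EuclideanSpace ℝ (Fin n)))
    (hE : E = (Matrix.toEuclideanLin T) '' Metric.closedBall 0 1) :
    (volume ((Submodule.orthogonalProjectionOnto ((Submodule.span ℝ {u})ᗮ)) '' E)).toReal /
        ((volume E).toReal * ‖Matrix.toEuclideanLin T⁻¹ u‖) =
      (volume (Metric.closedBall (0 : EuclideanSpace ℝ (Fin (n - 1))) 1)).toReal /
        (volume (Metric.closedBall (0 : EuclideanSpace ℝ (Fin n)) 1)).toReal :=
  ellipsoid_projection_formula_general n T hT u hu E hE
end
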